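/- arXiv:1803.10578 — 2 statements merged into one kernel-verified Lean document; each statement's English description precedes it below -/
import Mathlib

section
/- Let k ≥ 3 and for each i ∈ {1, …, k} let μᵢ be the uniform distribution on {1, …, k} \ {i}. Then for any coupling (Z₁, …, Z_k) of μ₁, …, μ_k there exist indices i ≠ j such that P(Zᵢ ≠ Zⱼ) ≥ 2/k. In particular, since ‖μᵢ − μⱼ‖_TV = 1/(k−1) < 2/k for all i ≠ j, no coupling of μ₁, …, μ_k induces an optimal coupling of every pair. -/
/-!
If `π f ≠ 0` then `f` has no fixed point, because `Zᵢ ≠ i` almost surely. A fixed-point-free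
`f : Fin k → Fin k` disagrees on at least `2 (k - 1)` ordered pairs `(i, j)`: a fibre
`f⁻¹(b)` has some size `n` with `1 ≤ n ≤ k - 1` (it misses `b`), and the pairs joining it to its
complement, in either order, number `2 n (k - n) ≥ 2 (k - 1)`. Averaging over `π`, the
disagreement probabilities of the `k (k - 1)` ordered pairs `i ≠ j` sum to at least
`2 (k - 1)`, so one of them is at least `2 / k`.
-/

open Finset

section DisagreeingPairs

variable {α β : Type*} [Fintype α]

theorem two_mul_card_fiber_mul_card_le_card_filter_ne [DecidableEq β] (f : α → β) (b : β) :
    2 * (#{i | f i = b} * #{i | f i ≠ b}) ≤ #{p : α × α | f p.1 ≠ f p.2} := by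
  set F : Finset α := {i | f i = b}
  set G : Finset α := {i | f i ≠ b}
  have hFG : Disjoint F G := disjoint_filter_filter_not _ _ _
  have hdisj : Disjoint (F ×ˢ G) (G ×ˢ F) := disjoint_product.mpr (Or.inl hFG)
  calc 2 * (#F * #G) = #((F ×ˢ G).disjUnion (G ×ˢ F) hdisj) := by
        rw [card_disjUnion, card_product, card_product]; ring
    _ ≤ _ := by
      refine card_le_card fun p hp => ?_
      simp only [mem_disjUnion, mem_product, F, G, mem_filter, mem_univ, true_and] at hp ⊢
      rcases hp with ⟨h₁, h₂⟩ | ⟨h₁, h₂⟩ <;> grind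

theorem sub_one_le_mul_sub {n k : ℕ} (h₁ : 1 ≤ n) (h₂ : n < k) : k - 1 ≤ n * (k - n) := by
  obtain ⟨m, rfl⟩ := Nat.exists_eq_add_of_le h₁
  obtain ⟨l, rfl⟩ := Nat.exists_eq_add_of_lt h₂
  rw [show 1 + m + l + 1 - (1 + m) = l + 1 by omega, show 1 + m + l + 1 - 1 = m + l + 1 by omega]
  nlinarith

theorem two_mul_card_sub_one_le_card_filter_ne [DecidableEq α] (f : α → α) (hf : ∀ i, f i ≠ i) :
    2 * (Fintype.card α - 1) ≤ #{p : α × α | f p.1 ≠ f p.2} := by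
  rcases isEmpty_or_nonempty α with _ | ⟨⟨i₀⟩⟩
  · simp
  set n := #{i | f i = f i₀}
  have hn_pos : 1 ≤ n := card_pos.mpr ⟨i₀, by simp⟩
  have hn_lt : n < Fintype.card α :=
    card_lt_univ_of_notMem (s := {i | f i = f i₀}) (x := f i₀) (by simpa using hf (f i₀))
  have hcompl : #{i | f i ≠ f i₀} = Fintype.card α - n := by
    have h := card_filter_add_card_filter_not (s := univ) (fun i => f i = f i₀)
    simp only [← ne_eq, card_univ] at h
    omega
  calc 2 * (Fintype.card α - 1) ≤ 2 * (n * (Fintype.card α - n)) := by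
        gcongr; exact sub_one_le_mul_sub hn_pos hn_lt
    _ ≤ _ := hcompl ▸ two_mul_card_fiber_mul_card_le_card_filter_ne f (f i₀)

end DisagreeingPairs

theorem sum_sum_filter_eq_sum_card_mul {ι κ M : Type*} [Fintype ι] [Fintype κ]
    [NonAssocSemiring M] (R : ι → κ → Prop) [∀ i j, Decidable (R i j)] (w : κ → M) :
    ∑ i, ∑ j ∈ {j | R i j}, w j = ∑ j, (#{i | R i j} : M) * w j := by
  simp_rw [sum_filter]
  rw [sum_comm]
  refine sum_congr rfl fun j _ => ?_
  rw [← sum_filter, sum_const, nsmul_eq_mul]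

theorem le_sum_mul_of_forall_ne_zero_le {ι : Type*} {s : Finset ι} {w N : ι → ℝ} {c : ℝ}
    (hw₀ : ∀ i ∈ s, 0 ≤ w i) (hw₁ : ∑ i ∈ s, w i = 1) (hN : ∀ i ∈ s, w i ≠ 0 → c ≤ N i) :
    c ≤ ∑ i ∈ s, N i * w i := by
  calc c = ∑ i ∈ s, c * w i := by rw [← mul_sum, hw₁, mul_one]
    _ ≤ ∑ i ∈ s, N i * w i := sum_le_sum fun i hi => by
      rcases eq_or_ne (w i) 0 with h | h
      · simp [h]
      · exact mul_le_mul_of_nonneg_right (hN i hi h) (hw₀ i hi)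

theorem exists_ne_two_div_card_le_sum_filter_ne {α : Type*} [Fintype α] [DecidableEq α]
    (hα : 2 ≤ Fintype.card α) (π : (α → α) → ℝ) (hπ₀ : ∀ f, 0 ≤ π f) (hπ₁ : ∑ f, π f = 1)
    (hfix : ∀ f, π f ≠ 0 → ∀ i, f i ≠ i) :
    ∃ i j : α, i ≠ j ∧ 2 / (Fintype.card α : ℝ) ≤ ∑ f ∈ {f : α → α | f i ≠ f j}, π f := by
  set k := Fintype.card α
  set P : α × α → ℝ := fun p => ∑ f ∈ {f : α → α | f p.1 ≠ f p.2}, π f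
  have hexpect : 2 * ((k : ℝ) - 1) ≤ ∑ p, P p := by
    rw [sum_sum_filter_eq_sum_card_mul]
    refine le_sum_mul_of_forall_ne_zero_le (fun f _ => hπ₀ f) hπ₁ fun f _ hf => ?_
    have := two_mul_card_sub_one_le_card_filter_ne f (hfix f hf)
    rw [← Nat.cast_ofNat, ← Nat.cast_pred (by omega), ← Nat.cast_mul]
    exact_mod_cast this
  have hdiag : ∑ p, P p = ∑ p ∈ univ.offDiag, P p := by
    refine (sum_subset (subset_univ _) fun ⟨i, j⟩ _ hp => ?_).symm
    obtain rfl : i = j := by simpa using hp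
    simp [P]
  have hconst : ∑ _p ∈ (univ : Finset α).offDiag, 2 / (k : ℝ) = 2 * ((k : ℝ) - 1) := by
    rw [sum_const, offDiag_card, card_univ, nsmul_eq_mul, Nat.cast_sub (Nat.le_mul_self k)]
    push_cast
    field_simp
  have hne : (univ : Finset α).offDiag.Nonempty := by
    obtain ⟨i, j, hij⟩ := Fintype.exists_pair_of_one_lt_card hα
    exact ⟨(i, j), by simpa using hij⟩
  obtain ⟨⟨i, j⟩, hij, hle⟩ :=
    exists_le_of_sum_le hne (hconst.trans_le (hexpect.trans_eq hdiag))
  exact ⟨i, j, (mem_offDiag.mp hij).2.2, hle⟩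

theorem sum_abs_sub_ite_eq_two_mul {α : Type*} [Fintype α] [DecidableEq α] {c : ℝ} (hc : 0 ≤ c)
    {i j : α} (hij : i ≠ j) :
    ∑ a, |(if a = i then 0 else c) - (if a = j then 0 else c)| = 2 * c := by
  have hpoint : ∀ a, |(if a = i then 0 else c) - (if a = j then 0 else c)|
      = (if a = i then c else 0) + (if a = j then c else 0) := by
    intro a
    by_cases hai : a = i <;> by_cases haj : a = j <;> simp_all [abs_of_nonneg hc]
  simp only [hpoint, sum_add_distrib, sum_ite_eq', mem_univ, if_true]
  ring

/-- For `μ i` uniform on `{1,…,k} \ {i}` with `k ≥ 3`, every coupling has some pair `i ≠ j`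
with disagreement probability at least `2/k`, although `‖μ i - μ j‖_TV = 1/(k-1)` for all
`i ≠ j`; in particular no coupling induces an optimal coupling of every pair. -/
theorem no_pairwise_optimal_grand_coupling
    {k : ℕ} (hk : 3 ≤ k)
    (μ : Fin k → Fin k → ℝ)
    (hμ : ∀ i a, μ i a = if a = i then 0 else ((k : ℝ) - 1)⁻¹)
    (π : (Fin k → Fin k) → ℝ)
    (hπ0 : ∀ f, 0 ≤ π f) (hπ1 : ∑ f, π f = 1)
    (hmarg : ∀ i a, ∑ f ∈ univ.filter (fun f : Fin k → Fin k => f i = a), π f = μ i a) :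
    (∃ i j : Fin k, i ≠ j ∧
        (2 : ℝ) / k ≤ ∑ f ∈ univ.filter (fun f : Fin k → Fin k => f i ≠ f j), π f) ∧
      ∀ i j : Fin k, i ≠ j →
        (1 / 2) * ∑ a, |μ i a - μ j a| = ((k : ℝ) - 1)⁻¹ := by
  have hfix : ∀ f, π f ≠ 0 → ∀ i, f i ≠ i := by
    intro f hf i hfi
    have hzero : ∑ g ∈ univ.filter (fun g : Fin k → Fin k => g i = i), π g = 0 := by
      simp [hmarg, hμ]
    exact hf ((sum_eq_zero_iff_of_nonneg fun g _ => hπ0 g).mp hzero f (by simpa using hfi))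
  have hc : 0 ≤ ((k : ℝ) - 1)⁻¹ :=
    inv_nonneg.mpr (sub_nonneg.mpr (by exact_mod_cast (by omega : 1 ≤ k)))
  refine ⟨?_, fun i j hij => ?_⟩
  · simpa using exists_ne_two_div_card_le_sum_filter_ne (by rw [Fintype.card_fin]; omega) π hπ0 hπ1 hfix
  · simp only [hμ, sum_abs_sub_ite_eq_two_mul hc hij]
    ring
end

section
/- Let k ≥ 3, and for each i ∈ {1, …, k} let μᵢ be the uniform distribution on {1, …, k} \ {i}. Fix 2 ≤ m ≤ k−1. Then: (a) for any subset {i₁, …, i_m} ⊆ {1, …, k} of size m, ∑_{a=1}^{k} min{μ_{i₁}(a), …, μ_{i_m}(a)} = 1 − (m−1)/(k−1); and (b) for any coupling (Z₁, …, Z_k) of μ₁, …, μ_k, there exists a subset {i₁, …, i_m} of size m such that P(Z_{i₁} = ⋯ = Z_{i_m}) ≤ 1 − m/k. Since 1 − m/k < 1 − (m−1)/(k−1), no coupling of μ₁, …, μ_k induces an optimal coupling of every m-element subcollection. -/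
/-!
Part (a): the minimum of the `μ i a` over `i ∈ I` is `0` for `a ∈ I` and `1/(k-1)` otherwise.

Part (b): since `Z i ≠ i` almost surely, `Z` is almost surely a non-constant function, and a
non-constant function on a `k`-element set is constant on at most `C(k-1, m)` of its `m`-subsets
when `m ≥ 2`. Averaging `P(Z constant on I)` over all `m`-subsets `I` therefore gives at most
`C(k-1, m) / C(k, m) = 1 - m/k`.
-/

open Finset

theorem Nat.cast_choose_pred_eq {n m : ℕ} (hmn : m ≤ n) (hn : 0 < n) :
    ((n - 1).choose m : ℝ) = n.choose m * (1 - m / n) := by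
  have h := Nat.choose_mul_succ_eq (n - 1) m
  rw [Nat.sub_add_cancel hn] at h
  have h' : ((n - 1).choose m : ℝ) * n = n.choose m * (n - m) := by exact_mod_cast h
  field_simp
  linarith

namespace Finset

variable {α : Type*} [DecidableEq α]

theorem inf'_ite_eq_ite_mem {R : Type*} [LinearOrder R] [Zero R] {c : R} (hc : 0 ≤ c)
    (I : Finset α) (hI : I.Nonempty) (a : α) :
    I.inf' hI (fun i => if a = i then 0 else c) = if a ∈ I then 0 else c := by
  split_ifs with ha
  · refine le_antisymm ((inf'_le _ ha).trans (by simp)) (le_inf' _ _ fun i _ => ?_)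
    split_ifs <;> simp [hc]
  · rw [inf'_congr hI rfl fun i hi => if_neg fun h : a = i => ha (h ▸ hi), inf'_const]

theorem sum_inf'_ite_eq_card_compl_nsmul [Fintype α] {R : Type*} [AddCommMonoid R] [LinearOrder R]
    {c : R} (hc : 0 ≤ c) (I : Finset α) (hI : I.Nonempty) :
    ∑ a, I.inf' hI (fun i => if a = i then 0 else c) = #Iᶜ • c := by
  simp_rw [inf'_ite_eq_ite_mem hc, ← sum_const, sum_ite, sum_const_zero, zero_add]
  congr 1
  ext; simp

end Finset

section GrandCoupling

variable {α β : Type*} [Fintype α] [DecidableEq α] [Fintype β] [DecidableEq β]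

omit [Fintype β] in
/-- Sending `I ∋ z` to `I - z + w` is injective on the sets where `f` is constant: its image
consists of sets on which `f` is not constant, since `f z ≠ f w`. -/
theorem card_filter_constOn_powersetCard_le (f : α → β) {z w : α} (hzw : f z ≠ f w) {m : ℕ}
    (hm : 2 ≤ m) :
    #{I ∈ univ.powersetCard m | ∀ i ∈ I, ∀ j ∈ I, f i = f j} ≤ (Fintype.card α - 1).choose m := by
  rw [← card_univ, ← card_erase_of_mem (mem_univ z), ← card_powersetCard]
  have hw : ∀ I : Finset α, (∀ i ∈ I, ∀ j ∈ I, f i = f j) → z ∈ I → w ∉ I :=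
    fun I hI hz hwI => hzw (hI z hz w hwI)
  have hnonconst : ∀ I : Finset α, I.card = m → (∀ i ∈ I, ∀ j ∈ I, f i = f j) → z ∈ I →
      ¬ ∀ i ∈ insert w (I.erase z), ∀ j ∈ insert w (I.erase z), f i = f j := by
    intro I hIm hI hz hJ
    obtain ⟨x, hx⟩ : (I.erase z).Nonempty := by
      rw [← card_pos, card_erase_of_mem hz]; omega
    exact hzw ((hI z hz x (mem_of_mem_erase hx)).trans
      (hJ x (mem_insert_of_mem hx) w (mem_insert_self w _)))
  refine card_le_card_of_injOn (fun I => if z ∈ I then insert w (I.erase z) else I) ?_ ?_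
  · intro I hI
    obtain ⟨hmem, hI⟩ := mem_filter.1 (mem_coe.1 hI)
    have hIm := (mem_powersetCard.1 hmem).2
    simp only [mem_coe, mem_powersetCard]
    split_ifs with hz
    · refine ⟨insert_subset (mem_erase.2 ⟨fun h => hzw (congrArg f h.symm), mem_univ w⟩)
        (erase_subset_erase z (subset_univ I)), ?_⟩
      rw [card_insert_of_notMem fun h => hw I hI hz (mem_of_mem_erase h),
        card_erase_of_mem hz]
      omega
    · exact ⟨fun x hx => mem_erase.2 ⟨fun h => hz (h ▸ hx), mem_univ x⟩, hIm⟩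
  · intro I hI J hJ hIJ
    obtain ⟨hmem, hI⟩ := mem_filter.1 (mem_coe.1 hI)
    have hIm := (mem_powersetCard.1 hmem).2
    obtain ⟨hmem, hJ⟩ := mem_filter.1 (mem_coe.1 hJ)
    have hJm := (mem_powersetCard.1 hmem).2
    dsimp only at hIJ
    split_ifs at hIJ with hzI hzJ hzJ
    · rw [← insert_erase hzI, ← insert_erase hzJ,
        ← erase_insert fun h => hw I hI hzI (mem_of_mem_erase h), hIJ,
        erase_insert fun h => hw J hJ hzJ (mem_of_mem_erase h)]
    · exact absurd (hIJ ▸ hJ) (hnonconst I hIm hI hzI)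
    · exact absurd (hIJ ▸ hI) (hnonconst J hJm hJ hzJ)
    · exact hIJ

theorem sum_powersetCard_sum_filter_constOn_le [Nonempty α] (π : (α → β) → ℝ) (hπ : ∀ f, 0 ≤ π f)
    (hconst : ∀ b, π (fun _ => b) = 0) {m : ℕ} (hm : 2 ≤ m) :
    ∑ I ∈ univ.powersetCard m, ∑ f with ∀ i ∈ I, ∀ j ∈ I, f i = f j, π f
      ≤ (Fintype.card α - 1).choose m * ∑ f, π f := by
  simp_rw [sum_filter]
  rw [sum_comm, mul_sum]
  refine sum_le_sum fun f _ => ?_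
  rw [← sum_filter, sum_const, nsmul_eq_mul]
  by_cases hf : ∃ z w, f z ≠ f w
  · obtain ⟨z, w, hzw⟩ := hf
    exact mul_le_mul_of_nonneg_right
      (by exact_mod_cast card_filter_constOn_powersetCard_le f hzw hm) (hπ f)
  · simp only [not_exists, not_not] at hf
    obtain ⟨z⟩ := ‹Nonempty α›
    rw [show f = fun _ => f z from funext fun x => hf x z, hconst, mul_zero, mul_zero]

theorem exists_card_eq_sum_filter_constOn_le (π : (α → β) → ℝ) (hπ : ∀ f, 0 ≤ π f)
    (hπ1 : ∑ f, π f = 1) (hconst : ∀ b, π (fun _ => b) = 0) {m : ℕ} (hm : 2 ≤ m)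
    (hmn : m ≤ Fintype.card α) :
    ∃ I : Finset α, #I = m ∧
      ∑ f with ∀ i ∈ I, ∀ j ∈ I, f i = f j, π f ≤ 1 - m / Fintype.card α := by
  have hn : 0 < Fintype.card α := by omega
  have : Nonempty α := Fintype.card_pos_iff.1 hn
  obtain ⟨I, hI, hle⟩ := exists_le_of_sum_le (powersetCard_nonempty.2 (by simpa using hmn)) <|
    calc ∑ I ∈ univ.powersetCard m, ∑ f with ∀ i ∈ I, ∀ j ∈ I, f i = f j, π f
        ≤ (Fintype.card α - 1).choose m := by
          simpa [hπ1] using sum_powersetCard_sum_filter_constOn_le π hπ hconst hm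
      _ = ∑ _I ∈ univ.powersetCard m, (1 - m / Fintype.card α : ℝ) := by
          rw [sum_const, card_powersetCard, card_univ, nsmul_eq_mul,
            Nat.cast_choose_pred_eq hmn hn]
  exact ⟨I, (mem_powersetCard.1 hI).2, hle⟩

end GrandCoupling

theorem no_m_wise_optimal_grand_coupling_general
    {k m : ℕ} (hm2 : 2 ≤ m) (hmk : m ≤ k - 1)
    (μ : Fin k → Fin k → ℝ)
    (hμ : ∀ i a, μ i a = if a = i then 0 else ((k : ℝ) - 1)⁻¹) :
    (∀ I : Finset (Fin k), ∀ hI : I.Nonempty, I.card = m →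
        ∑ a, I.inf' hI (fun i => μ i a) = 1 - ((m : ℝ) - 1) / ((k : ℝ) - 1)) ∧
      (∀ π : (Fin k → Fin k) → ℝ,
        (∀ f, 0 ≤ π f) → (∑ f, π f = 1) →
        (∀ i a, ∑ f ∈ univ.filter (fun f : Fin k → Fin k => f i = a), π f = μ i a) →
        ∃ I : Finset (Fin k), I.card = m ∧
          ∑ f ∈ univ.filter (fun f : Fin k → Fin k => ∀ i ∈ I, ∀ j ∈ I, f i = f j), π f
            ≤ 1 - (m : ℝ) / k) ∧
      1 - (m : ℝ) / k < 1 - ((m : ℝ) - 1) / ((k : ℝ) - 1) := by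
  have hmk' : m < k := by omega
  have hk1 : (0 : ℝ) < k - 1 := by rw [sub_pos]; exact_mod_cast (by omega : 1 < k)
  obtain rfl : μ = fun i a => if a = i then 0 else ((k : ℝ) - 1)⁻¹ := funext₂ hμ
  refine ⟨fun I hI hIm => ?_, fun π hπ hπ1 hmarg => ?_, ?_⟩
  · rw [sum_inf'_ite_eq_card_compl_nsmul (inv_nonneg.2 hk1.le), card_compl, Fintype.card_fin,
      hIm, nsmul_eq_mul, Nat.cast_sub hmk'.le]
    field_simp
    ring
  · have hconst (b : Fin k) : π (fun _ => b) = 0 :=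
      (sum_eq_zero_iff_of_nonneg fun f _ => hπ f).1 ((hmarg b b).trans (if_pos rfl)) _
        (mem_filter.2 ⟨mem_univ _, rfl⟩)
    obtain ⟨I, hIm, hle⟩ :=
      exists_card_eq_sum_filter_constOn_le π hπ hπ1 hconst hm2 (by simp [hmk'.le])
    rw [Fintype.card_fin] at hle
    -- the two sides decide `∀ i ∈ I, …` with different (subsingleton) `Decidable` instances
    exact ⟨I, hIm, by convert hle⟩
  · have hmkR : (m : ℝ) < k := by exact_mod_cast hmk'
    rw [sub_lt_sub_iff_left, div_lt_div_iff₀ hk1 (by linarith)]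
    linarith

/-- For `μ i` uniform on `{1,…,k} \ {i}` and `2 ≤ m ≤ k-1`:
(a) every `m`-element subcollection has `∑_a min_i μ i a = 1 - (m-1)/(k-1)`;
(b) for every grand coupling there is an `m`-element subset whose agreement
probability is at most `1 - m/k`, and `1 - m/k < 1 - (m-1)/(k-1)`.  Hence no grand
coupling induces an optimal coupling of every `m`-element subcollection. -/
theorem no_m_wise_optimal_grand_coupling
    {k m : ℕ} (hk : 3 ≤ k) (hm2 : 2 ≤ m) (hmk : m ≤ k - 1)
    (μ : Fin k → Fin k → ℝ)
    (hμ : ∀ i a, μ i a = if a = i then 0 else ((k : ℝ) - 1)⁻¹) :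
    (∀ I : Finset (Fin k), ∀ hI : I.Nonempty, I.card = m →
        ∑ a, I.inf' hI (fun i => μ i a) = 1 - ((m : ℝ) - 1) / ((k : ℝ) - 1)) ∧
      (∀ π : (Fin k → Fin k) → ℝ,
        (∀ f, 0 ≤ π f) → (∑ f, π f = 1) →
        (∀ i a, ∑ f ∈ univ.filter (fun f : Fin k → Fin k => f i = a), π f = μ i a) →
        ∃ I : Finset (Fin k), I.card = m ∧
          ∑ f ∈ univ.filter (fun f : Fin k → Fin k => ∀ i ∈ I, ∀ j ∈ I, f i = f j), π f
            ≤ 1 - (m : ℝ) / k) ∧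
      1 - (m : ℝ) / k < 1 - ((m : ℝ) - 1) / ((k : ℝ) - 1) :=
  no_m_wise_optimal_grand_coupling_general hm2 hmk μ hμ
end
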